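/- Let P ⊆ ℕ be ultimately periodic. Then for every finite deterministic parity automaton A over the alphabet {0,1} × {0,1} × {0,1} defining the relation R_A on triples of ω-sequences, either there is a finite-state causal operator F : (ℕ → Bool) × (ℕ → Bool) → (ℕ → Bool) such that (X, F(X, χ_P), χ_P) ∈ R_A for every X, or there is a finite-state strongly causal operator G : (ℕ → Bool) × (ℕ → Bool) → (ℕ → Bool) such that (G(Y, χ_P), Y, χ_P) ∉ R_A for every Y. -/

import Mathlib

open Classical in
/-- The characteristic ω-sequence of a set of natural numbers. -/
noncomputable def chi (P : Set ℕ) : ℕ → Bool := fun n => decide (n ∈ P)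

/-- A causal operator is *finite state* if it is computed by a Moore automaton
with a finite state set. -/
def FiniteStateCausal {α β : Type} (F : (ℕ → α) → (ℕ → β)) : Prop :=
  ∃ (Q : Type) (_ : Fintype Q) (δ : Q → α → Q) (q₀ : Q) (out : Q → α → β),
    ∀ (x : ℕ → α) (n : ℕ),
      F x n = out (((List.range n).map x).foldl δ q₀) (x n)

/-- A strongly causal operator is *finite state* if it is computed by a Mealey
automaton with a finite state set. -/
def FiniteStateStronglyCausal {α β : Type} (F : (ℕ → α) → (ℕ → β)) : Prop :=
  ∃ (Q : Type) (_ : Fintype Q) (δ : Q → α → Q) (q₀ : Q) (out : Q → β),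
    ∀ (x : ℕ → α) (n : ℕ),
      F x n = out (((List.range n).map x).foldl δ q₀)

/-- A two-argument operator `H(X, Z)` identified with an operator on
ω-sequences over the product alphabet `Bool × Bool`. -/
def PairOp (H : (ℕ → Bool) → (ℕ → Bool) → (ℕ → Bool)) :
    (ℕ → Bool × Bool) → (ℕ → Bool) :=
  fun z => H (fun n => (z n).1) (fun n => (z n).2)

/-- Acceptance by a deterministic parity automaton `(Q, δ, q₀, col)`: the
minimal color of a state visited infinitely often along the run on the
ω-word `a` is even. -/
def ParityAccepts {Q σ : Type*} (δ : Q → σ → Q) (q₀ : Q) (col : Q → ℕ)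
    (a : ℕ → σ) : Prop :=
  Even (sInf {k | ∃ q, {n | ((List.range (n + 1)).map a).foldl δ q₀ = q}.Infinite ∧
    col q = k})

/-!
The automaton, run in parallel with the tails of `χ_P` (finitely many, since `P` is ultimately
periodic), is a finite game of rounds: the choosing player picks `X n`, the answering player picks
`Y n`, and the state advances. Encoded as a parity game on a finite arena, it is positionally
determined by Zielonka's theorem. Read along the run, a positional winning strategy is a
finite-state operator: causal for the answering player, who sees `X n`, and strongly causal for
the choosing player.
-/

open Filter

section Run

variable {S α : Type*}

/-- Literally the run occurring in `FiniteStateCausal` and `ParityAccepts`. -/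
def run (δ : S → α → S) (s₀ : S) (x : ℕ → α) (n : ℕ) : S :=
  ((List.range n).map x).foldl δ s₀

theorem run_succ (δ : S → α → S) (s₀ : S) (x : ℕ → α) (n : ℕ) :
    run δ s₀ x (n + 1) = δ (run δ s₀ x n) (x n) := by
  simp [run, List.range_succ]

theorem run_comp {β : Type*} (δ : S → α → S) (s₀ : S) (g : β → α) (x : ℕ → β) :
    run (fun s y => δ s (g y)) s₀ x = run δ s₀ (g ∘ x) := by
  funext n
  simp [run, List.foldl_map]

end Run

section InfinitelyOften

variable {V W : Type*}

def infOcc (p : ℕ → V) : Set V := {v | ∃ᶠ n in atTop, p n = v}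

theorem exists_mem_infOcc_of_frequently [Finite V] {p : ℕ → V} {P : V → Prop}
    (h : ∃ᶠ n in atTop, P (p n)) : ∃ v ∈ infOcc p, P v := by
  have : ∃ᶠ n in atTop, ∃ v, p n = v ∧ P v := h.mono fun n hn => ⟨p n, rfl, hn⟩
  obtain ⟨v, hv⟩ := frequently_exists.1 this
  exact ⟨v, hv.mono fun _ h => h.1, hv.exists.elim fun _ h => h.2⟩

theorem infOcc_subset {p : ℕ → V} {S : Set V} (h : ∀ n, p n ∈ S) : infOcc p ⊆ S :=
  fun _ hv => hv.exists.elim fun n hn => hn ▸ h n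

theorem infOcc_comp [Finite V] (f : V → W) (p : ℕ → V) : infOcc (f ∘ p) = f '' infOcc p := by
  ext w
  constructor
  · intro h
    obtain ⟨v, hv, rfl⟩ := exists_mem_infOcc_of_frequently (P := (f · = w)) h
    exact ⟨v, hv, rfl⟩
  · rintro ⟨v, hv, rfl⟩
    exact hv.mono fun n hn => by simp [hn]

theorem infOcc_comp_of_rightInverse {f g : ℕ → ℕ} (hf : Tendsto f atTop atTop)
    (hg : Tendsto g atTop atTop) (hfg : ∀ᶠ n in atTop, f (g n) = n) (p : ℕ → V) :
    infOcc (p ∘ f) = infOcc p := by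
  ext v
  refine ⟨fun h => hf.frequently (p := (p · = v)) h, fun h => hg.frequently ?_⟩
  exact (h.and_eventually hfg).mono fun n ⟨hn, he⟩ => by simp [he, hn]

/-- Only meaningful when some position recurs, e.g. for finite `V`: otherwise `sInf ∅ = 0`. -/
noncomputable def minInf (Ω : V → ℕ) (p : ℕ → V) : ℕ := sInf (Ω '' infOcc p)

theorem minInf_comp [Finite V] (Ω : W → ℕ) (f : V → W) (p : ℕ → V) :
    minInf Ω (f ∘ p) = minInf (Ω ∘ f) p := by
  rw [minInf, minInf, infOcc_comp, Set.image_image]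
  rfl

theorem minInf_comp_of_rightInverse (Ω : V → ℕ) {f g : ℕ → ℕ} (hf : Tendsto f atTop atTop)
    (hg : Tendsto g atTop atTop) (hfg : ∀ᶠ n in atTop, f (g n) = n) (p : ℕ → V) :
    minInf Ω (p ∘ f) = minInf Ω p := by
  rw [minInf, minInf, infOcc_comp_of_rightInverse hf hg hfg]

theorem minInf_shift (Ω : V → ℕ) (p : ℕ → V) (t : ℕ) : minInf Ω (fun n => p (n + t)) = minInf Ω p :=
  minInf_comp_of_rightInverse Ω (tendsto_add_atTop_nat t) (tendsto_sub_atTop_nat t)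
    ((eventually_ge_atTop t).mono fun _ => Nat.sub_add_cancel) p

theorem minInf_eq_of_mem_infOcc (Ω : V → ℕ) {p : ℕ → V} {v : V} (hv : v ∈ infOcc p)
    (hmin : ∀ u ∈ infOcc p, Ω v ≤ Ω u) : minInf Ω p = Ω v :=
  IsLeast.csInf_eq ⟨⟨v, hv, rfl⟩, by rintro _ ⟨u, hu, rfl⟩; exact hmin u hu⟩

end InfinitelyOften

theorem parityAccepts_iff_even_minInf {Q σ : Type*} (δ : Q → σ → Q) (q₀ : Q) (col : Q → ℕ) (a : ℕ → σ) :
    ParityAccepts δ q₀ col a ↔ Even (minInf col (run δ q₀ a)) := by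
  rw [← minInf_shift col _ 1, ParityAccepts, minInf, infOcc]
  simp only [Nat.frequently_atTop_iff_infinite]
  rfl

structure ParityGame (V : Type*) where
  owner : V → Bool
  Move : V → V → Prop
  priority : V → ℕ

namespace ParityGame

variable {V : Type*} (G : ParityGame V)

def Wins (b : Bool) (p : ℕ → V) : Prop := Even (minInf G.priority p) ↔ b = false

def IsPlay (S : Set V) (p : ℕ → V) : Prop := ∀ n, p n ∈ S ∧ G.Move (p n) (p (n + 1))

def Conforms (b : Bool) (σ : V → V) (p : ℕ → V) : Prop :=
  ∀ n, G.owner (p n) = b → p (n + 1) = σ (p n)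

variable {G}

theorem wins_shift {b : Bool} {p : ℕ → V} (t : ℕ) :
    G.Wins b (fun n => p (n + t)) ↔ G.Wins b p := by
  rw [Wins, Wins, minInf_shift]

theorem IsPlay.shift {S : Set V} {p : ℕ → V} (hp : G.IsPlay S p) (t : ℕ) :
    G.IsPlay S (fun n => p (n + t)) := fun n => by
  simpa only [Nat.add_right_comm n 1 t] using hp (n + t)

theorem IsPlay.mono {S S' : Set V} {p : ℕ → V} (hp : G.IsPlay S p) (h : S ⊆ S') :
    G.IsPlay S' p :=
  fun n => ⟨h (hp n).1, (hp n).2⟩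

section Attractor

variable (G) (b : Bool) (S T : Set V)

/-- The positions of `S` from which player `b` can force the play into `T` within `n` moves. -/
def attrLevel : ℕ → Set V
  | 0 => T
  | n + 1 => attrLevel n ∪ {v ∈ S | (G.owner v = b ∧ ∃ u ∈ attrLevel n, G.Move v u) ∨
      (G.owner v ≠ b ∧ ∀ u ∈ S, G.Move v u → u ∈ attrLevel n)}

def attr : Set V := ⋃ n, G.attrLevel b S T n

noncomputable def attrRank (v : V) : ℕ := sInf {n | v ∈ G.attrLevel b S T n}

open Classical in
noncomputable def attrMove (v : V) : V :=
  if h : ∃ u, G.Move v u ∧ u ∈ G.attr b S T ∧ G.attrRank b S T u < G.attrRank b S T v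
  then h.choose else v

variable {G b S T}

theorem attrLevel_mono : Monotone (G.attrLevel b S T) :=
  monotone_nat_of_le_succ fun _ => Set.subset_union_left

theorem subset_attr : T ⊆ G.attr b S T := Set.subset_iUnion (G.attrLevel b S T) 0

theorem attr_subset (hT : T ⊆ S) : G.attr b S T ⊆ S := by
  refine Set.iUnion_subset fun n => ?_
  induction n with
  | zero => exact hT
  | succ n ih => exact Set.union_subset ih fun v hv => hv.1

theorem mem_attr_of_move {u v : V} (hv : v ∈ S) (hown : G.owner v = b) (he : G.Move v u)
    (hu : u ∈ G.attr b S T) : v ∈ G.attr b S T := by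
  obtain ⟨n, hn⟩ := Set.mem_iUnion.1 hu
  exact Set.mem_iUnion.2 ⟨n + 1, Or.inr ⟨hv, Or.inl ⟨hown, u, hn, he⟩⟩⟩

theorem exists_attr_eq_attrLevel [Finite V] : ∃ n, G.attr b S T = G.attrLevel b S T n := by
  obtain ⟨n, hn⟩ := WellFoundedGT.monotone_chain_condition ⟨G.attrLevel b S T, attrLevel_mono⟩
  refine ⟨n, (Set.iUnion_subset fun m => ?_).antisymm (Set.subset_iUnion _ n)⟩
  rcases le_total m n with h | h
  · exact attrLevel_mono h
  · exact (hn m h).ge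

theorem mem_attr_of_forall_move [Finite V] {v : V} (hv : v ∈ S) (hown : G.owner v ≠ b)
    (h : ∀ u ∈ S, G.Move v u → u ∈ G.attr b S T) : v ∈ G.attr b S T := by
  obtain ⟨n, hn⟩ : ∃ n, G.attr b S T = G.attrLevel b S T n := exists_attr_eq_attrLevel
  rw [hn] at h
  exact Set.mem_iUnion.2 ⟨n + 1, Or.inr ⟨hv, Or.inr ⟨hown, h⟩⟩⟩

theorem attrLevel_succ_descent {n : ℕ} {v : V} (hv : v ∈ G.attrLevel b S T (n + 1))
    (hvT : v ∉ T) : (G.owner v = b → ∃ u ∈ G.attrLevel b S T n, G.Move v u) ∧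
      (G.owner v ≠ b → ∀ u ∈ S, G.Move v u → u ∈ G.attrLevel b S T n) := by
  induction n with
  | zero =>
    rcases hv with hv | ⟨-, ⟨hown, hex⟩ | ⟨hown, hall⟩⟩
    · exact absurd hv hvT
    · exact ⟨fun _ => hex, (absurd hown ·)⟩
    · exact ⟨(absurd · hown), fun _ => hall⟩
  | succ n ih =>
    rcases hv with hv | ⟨-, ⟨hown, hex⟩ | ⟨hown, hall⟩⟩
    · exact ⟨fun h => ((ih hv).1 h).imp fun u hu => ⟨attrLevel_mono n.le_succ hu.1, hu.2⟩,
        fun h u hu he => attrLevel_mono n.le_succ ((ih hv).2 h u hu he)⟩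
    · exact ⟨fun _ => hex, (absurd hown ·)⟩
    · exact ⟨(absurd · hown), fun _ => hall⟩

theorem mem_attrLevel_attrRank {v : V} (hv : v ∈ G.attr b S T) :
    v ∈ G.attrLevel b S T (G.attrRank b S T v) :=
  Nat.sInf_mem (Set.mem_iUnion.1 hv)

theorem attr_descent {v : V} (hv : v ∈ G.attr b S T) (hvT : v ∉ T) :
    (G.owner v = b → G.Move v (G.attrMove b S T v) ∧ G.attrMove b S T v ∈ G.attr b S T ∧
      G.attrRank b S T (G.attrMove b S T v) < G.attrRank b S T v) ∧
    (G.owner v ≠ b → ∀ u ∈ S, G.Move v u →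
      u ∈ G.attr b S T ∧ G.attrRank b S T u < G.attrRank b S T v) := by
  have hmem := mem_attrLevel_attrRank hv
  obtain ⟨n, hn⟩ : ∃ n, G.attrRank b S T v = n + 1 :=
    Nat.exists_eq_succ_of_ne_zero fun h => hvT (by rwa [h] at hmem)
  rw [hn] at hmem
  have lower {w : V} (hw : w ∈ G.attrLevel b S T n) :
      w ∈ G.attr b S T ∧ G.attrRank b S T w < G.attrRank b S T v :=
    ⟨Set.mem_iUnion.2 ⟨n, hw⟩, hn ▸ Nat.lt_succ_of_le (Nat.sInf_le hw)⟩
  refine ⟨fun hown => ?_, fun hown u hu he =>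
    lower ((attrLevel_succ_descent hmem hvT).2 hown u hu he)⟩
  obtain ⟨w, hw, hew⟩ := (attrLevel_succ_descent hmem hvT).1 hown
  have hex : ∃ w, G.Move v w ∧ w ∈ G.attr b S T ∧ G.attrRank b S T w < G.attrRank b S T v :=
    ⟨w, hew, lower hw⟩
  rw [attrMove, dif_pos hex]
  exact hex.choose_spec

theorem exists_mem_of_mem_attr {p : ℕ → V} (hp : G.IsPlay S p)
    (hσ : ∀ n, p n ∈ G.attr b S T → p n ∉ T → G.owner (p n) = b →
      p (n + 1) = G.attrMove b S T (p n)) :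
    ∀ t, p t ∈ G.attr b S T → ∃ s ≥ t, p s ∈ T := by
  suffices ∀ r t, G.attrRank b S T (p t) ≤ r → p t ∈ G.attr b S T → ∃ s ≥ t, p s ∈ T from
    fun t => this _ t le_rfl
  intro r
  induction r with
  | zero =>
    intro t hr ht
    have := mem_attrLevel_attrRank ht
    rw [Nat.le_zero.1 hr] at this
    exact ⟨t, le_rfl, this⟩
  | succ r ih =>
    intro t hr ht
    by_cases hT : p t ∈ T
    · exact ⟨t, le_rfl, hT⟩
    obtain ⟨hA, hlt⟩ : p (t + 1) ∈ G.attr b S T ∧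
        G.attrRank b S T (p (t + 1)) < G.attrRank b S T (p t) := by
      by_cases hown : G.owner (p t) = b
      · rw [hσ t ht hT hown]
        exact ((attr_descent ht hT).1 hown).2
      · exact (attr_descent ht hT).2 hown _ (hp (t + 1)).1 (hp t).2
    obtain ⟨s, hs, hsT⟩ := ih (t + 1) (by omega) hA
    exact ⟨s, by omega, hsT⟩

theorem frequently_mem_of_frequently_mem_attr {p : ℕ → V} (hp : G.IsPlay S p)
    (hσ : ∀ n, p n ∈ G.attr b S T → p n ∉ T → G.owner (p n) = b →
      p (n + 1) = G.attrMove b S T (p n))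
    (h : ∃ᶠ n in atTop, p n ∈ G.attr b S T) : ∃ᶠ n in atTop, p n ∈ T := by
  refine frequently_atTop.2 fun t => ?_
  obtain ⟨s, hts, hs⟩ := frequently_atTop.1 h t
  obtain ⟨r, hsr, hr⟩ := exists_mem_of_mem_attr hp hσ s hs
  exact ⟨r, hts.trans hsr, hr⟩

theorem sdiff_attr_total [Finite V] (hS : ∀ v ∈ S, ∃ u ∈ S, G.Move v u) :
    ∀ v ∈ S \ G.attr b S T, ∃ u ∈ S \ G.attr b S T, G.Move v u := by
  rintro v ⟨hvS, hvA⟩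
  by_cases hown : G.owner v = b
  · obtain ⟨u, hu, he⟩ := hS v hvS
    exact ⟨u, ⟨hu, fun huA => hvA (mem_attr_of_move hvS hown he huA)⟩, he⟩
  · by_contra! h
    exact hvA (mem_attr_of_forall_move hvS hown fun u hu he =>
      by_contra fun huA => h u ⟨hu, huA⟩ he)

end Attractor

section Dominion

variable (G) in
/-- `wins` only concerns plays inside `W`: by the two trap conditions, every play of `S` that
starts in `W` and follows `σ` stays there (`IsDominion.mem_of_conforms`). -/
structure IsDominion (b : Bool) (S W : Set V) (σ : V → V) : Prop where
  subset : W ⊆ S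
  move_mem : ∀ v ∈ W, G.owner v = b → G.Move v (σ v) ∧ σ v ∈ W
  forall_move_mem : ∀ v ∈ W, G.owner v ≠ b → ∀ u ∈ S, G.Move v u → u ∈ W
  wins : ∀ p, G.IsPlay W p → G.Conforms b σ p → G.Wins b p

variable {b : Bool} {S W : Set V} {σ : V → V}

theorem isDominion_empty : G.IsDominion b S ∅ σ where
  subset := Set.empty_subset S
  move_mem _ h := h.elim
  forall_move_mem _ h := h.elim
  wins _ hp := (hp 0).1.elim

namespace IsDominion

theorem mem_of_conforms (hD : G.IsDominion b S W σ) {p : ℕ → V} (hp : G.IsPlay S p)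
    (hσ : ∀ n, p n ∈ W → G.owner (p n) = b → p (n + 1) = σ (p n)) (h0 : p 0 ∈ W) :
    ∀ n, p n ∈ W
  | 0 => h0
  | n + 1 => by
    have hn := hD.mem_of_conforms hp hσ h0 n
    by_cases hown : G.owner (p n) = b
    · rw [hσ n hn hown]
      exact (hD.move_mem _ hn hown).2
    · exact hD.forall_move_mem _ hn hown _ (hp (n + 1)).1 (hp n).2

theorem wins_of_mem (hD : G.IsDominion b S W σ) {p : ℕ → V} (hp : G.IsPlay S p)
    (hσ : ∀ n, p n ∈ W → G.owner (p n) = b → p (n + 1) = σ (p n)) {t : ℕ} (ht : p t ∈ W) :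
    G.Wins b p := by
  rw [← wins_shift t]
  have hσ' (n : ℕ) (hn : p (n + t) ∈ W) (hown : G.owner (p (n + t)) = b) :
      p (n + 1 + t) = σ (p (n + t)) := by
    rw [Nat.add_right_comm]
    exact hσ (n + t) hn hown
  have hmem := hD.mem_of_conforms (hp.shift t) hσ' (by simpa using ht)
  exact hD.wins _ (fun n => ⟨hmem n, (hp.shift t n).2⟩) fun n => hσ' n (hmem n)

/-- The opponent `b'` has no move from outside its attractor into it. -/
theorem of_sdiff_attr {b' : Bool} {T : Set V} (hb : b' ≠ b)
    (hD : G.IsDominion b (S \ G.attr b' S T) W σ) : G.IsDominion b S W σ where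
  subset := hD.subset.trans Set.sdiff_subset
  move_mem := hD.move_mem
  forall_move_mem v hv hown u hu he := by
    have hv' := hD.subset hv
    have hown' : G.owner v = b' := (Bool.eq_not_iff.2 hown).trans (Bool.eq_not_iff.2 hb).symm
    exact hD.forall_move_mem v hv hown u
      ⟨hu, fun huA => hv'.2 (mem_attr_of_move hv'.1 hown' he huA)⟩ he
  wins := hD.wins

open Classical in
theorem attr (hD : G.IsDominion b S W σ) :
    G.IsDominion b S (G.attr b S W) (W.piecewise σ (G.attrMove b S W)) where
  subset := attr_subset hD.subset
  move_mem v hv hown := by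
    by_cases hvW : v ∈ W
    · rw [W.piecewise_eq_of_mem _ _ hvW]
      exact (hD.move_mem v hvW hown).imp_right (subset_attr ·)
    · rw [W.piecewise_eq_of_notMem _ _ hvW]
      exact ((attr_descent hv hvW).1 hown).imp_right And.left
  forall_move_mem v hv hown u hu he := by
    by_cases hvW : v ∈ W
    · exact subset_attr (hD.forall_move_mem v hvW hown u hu he)
    · exact ((attr_descent hv hvW).2 hown u hu he).1
  wins p hp hc := by
    have hpS := hp.mono (attr_subset hD.subset)
    obtain ⟨t, -, ht⟩ := exists_mem_of_mem_attr hpS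
      (fun n _ hn hown => (hc n hown).trans (W.piecewise_eq_of_notMem _ _ hn)) 0 (hp 0).1
    exact hD.wins_of_mem hpS (fun n hn hown => (hc n hown).trans (W.piecewise_eq_of_mem _ _ hn)) ht

open Classical in
theorem union_sdiff {B : Set V} {σ' : V → V} (hB : G.IsDominion b S B σ)
    (hD : G.IsDominion b (S \ B) W σ') : G.IsDominion b S (B ∪ W) (B.piecewise σ σ') where
  subset := Set.union_subset hB.subset (hD.subset.trans Set.sdiff_subset)
  move_mem v hv hown := by
    rcases hv with hv | hv
    · rw [B.piecewise_eq_of_mem _ _ hv]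
      exact (hB.move_mem v hv hown).imp_right Or.inl
    · rw [B.piecewise_eq_of_notMem _ _ (hD.subset hv).2]
      exact (hD.move_mem v hv hown).imp_right Or.inr
  forall_move_mem v hv hown u hu he := by
    rcases hv with hv | hv
    · exact .inl (hB.forall_move_mem v hv hown u hu he)
    · by_cases huB : u ∈ B
      · exact .inl huB
      · exact .inr (hD.forall_move_mem v hv hown u ⟨hu, huB⟩ he)
  wins p hp hc := by
    by_cases h : ∃ t, p t ∈ B
    · obtain ⟨t, ht⟩ := h
      have hpS := hp.mono (Set.union_subset hB.subset (hD.subset.trans Set.sdiff_subset))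
      exact hB.wins_of_mem hpS (fun n hn hown => (hc n hown).trans (B.piecewise_eq_of_mem _ _ hn)) ht
    · rw [not_exists] at h
      exact hD.wins p (fun n => ⟨(hp n).1.resolve_left (h n), (hp n).2⟩)
        fun n hown => (hc n hown).trans (B.piecewise_eq_of_notMem _ _ (h n))

end IsDominion

open Classical in
/-- A conforming play either eventually stays outside the attractor, or returns to it, hence to
priority `m`, infinitely often. -/
theorem isDominion_of_sdiff_attr_min [Finite V] {i : Bool} {m : ℕ}
    (hS : ∀ v ∈ S, ∃ u ∈ S, G.Move v u) (hm : ∀ v ∈ S, m ≤ G.priority v)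
    (hi : Even m ↔ i = false)
    (hD : G.IsDominion i (S \ G.attr i S {v ∈ S | G.priority v = m})
      (S \ G.attr i S {v ∈ S | G.priority v = m}) σ) : ∃ σ', G.IsDominion i S S σ' := by
  set N := {v ∈ S | G.priority v = m}
  set A := G.attr i S N
  choose! next hnext using hS
  refine ⟨(S \ A).piecewise σ (N.piecewise next (G.attrMove i S N)), ⟨subset_rfl, ?_, ?_, ?_⟩⟩
  · intro v hv hown
    by_cases hvA : v ∈ A
    · rw [Set.piecewise_eq_of_notMem _ _ _ (fun h => h.2 hvA)]
      by_cases hvN : v ∈ N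
      · rw [Set.piecewise_eq_of_mem _ _ _ hvN]
        exact (hnext v hv).symm
      · rw [Set.piecewise_eq_of_notMem _ _ _ hvN]
        obtain ⟨he, hA, -⟩ := (attr_descent hvA hvN).1 hown
        exact ⟨he, attr_subset (Set.sep_subset _ _) hA⟩
    · have hv' : v ∈ S \ A := ⟨hv, hvA⟩
      rw [Set.piecewise_eq_of_mem _ _ _ hv']
      exact (hD.move_mem v hv' hown).imp_right And.left
  · exact fun _ _ _ u hu _ => hu
  · intro p hp hc
    by_cases hA : ∃ᶠ n in atTop, p n ∈ A
    · have hN := frequently_mem_of_frequently_mem_attr hp (fun n hnA hnN hown => by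
        rw [hc n hown, Set.piecewise_eq_of_notMem _ _ _ (fun h => h.2 hnA),
          Set.piecewise_eq_of_notMem _ _ _ hnN]) hA
      obtain ⟨v, hv, hvS, rfl⟩ := exists_mem_infOcc_of_frequently (P := (· ∈ N)) hN
      rw [Wins, minInf_eq_of_mem_infOcc G.priority hv fun u hu =>
        hm u (infOcc_subset (fun n => (hp n).1) hu)]
      exact hi
    · obtain ⟨t, ht⟩ := eventually_atTop.1 (not_frequently.1 hA)
      have hmem (n : ℕ) : p (n + t) ∈ S \ A := ⟨(hp _).1, ht _ (Nat.le_add_left t n)⟩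
      rw [← wins_shift t]
      refine hD.wins _ (fun n => ⟨hmem n, (hp.shift t n).2⟩) fun n hown => ?_
      rw [Nat.add_right_comm, hc _ hown, Set.piecewise_eq_of_mem _ _ _ (hmem n)]

end Dominion

variable (G) in
def PositionallyDetermined (S : Set V) : Prop :=
  ∃ W : Bool → Set V, (∀ v ∈ S, ∃ b, v ∈ W b) ∧ ∀ b, ∃ σ, G.IsDominion b S (W b) σ

theorem positionallyDetermined_of {S X Y : Set V} (i : Bool) (hX : ∃ σ, G.IsDominion i S X σ)
    (hY : ∃ σ, G.IsDominion (!i) S Y σ) (hXY : S ⊆ X ∪ Y) : G.PositionallyDetermined S := by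
  refine ⟨fun b => if b = i then X else Y, fun v hv => ?_, fun b => ?_⟩
  · rcases hXY hv with h | h
    · exact ⟨i, by simpa using h⟩
    · exact ⟨!i, by simpa using h⟩
  · rcases Bool.eq_or_eq_not b i with rfl | rfl
    · simpa using hX
    · simpa using hY

/-- Zielonka's theorem. Let `i` be the player favoured by the least priority `m` and `A` its
attractor to priority `m`. If `i` wins all of `S \ A`, it wins all of `S`. Otherwise the
opponent's winning part of `S \ A`, together with its attractor `B`, is won by the opponent,
and the rest of the game is `S \ B`. -/
theorem positionallyDetermined [Finite V] (S : Set V) (hS : ∀ v ∈ S, ∃ u ∈ S, G.Move v u) :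
    G.PositionallyDetermined S := by
  induction S using WellFoundedLT.induction with
  | _ S ih =>
  rcases S.eq_empty_or_nonempty with rfl | ⟨v₀, hv₀⟩
  · exact ⟨fun _ => ∅, by simp, fun _ => ⟨id, isDominion_empty⟩⟩
  obtain ⟨vm, hvm, hm⟩ : ∃ vm ∈ S, ∀ v ∈ S, G.priority vm ≤ G.priority v := by
    obtain ⟨vm, hvm, hmin⟩ := Nat.sInf_mem (⟨_, v₀, hv₀, rfl⟩ : (G.priority '' S).Nonempty)
    exact ⟨vm, hvm, fun v hv => hmin ▸ Nat.sInf_le ⟨v, hv, rfl⟩⟩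
  set i := !decide (Even (G.priority vm))
  set A := G.attr i S {v ∈ S | G.priority v = G.priority vm}
  have hA : S \ A ⊂ S := Set.sdiff_ssubset_left_iff.2 ⟨vm, hvm, subset_attr ⟨hvm, rfl⟩⟩
  obtain ⟨W', hW'cover, hW'⟩ := ih _ hA (sdiff_attr_total hS)
  by_cases hempty : W' (!i) = ∅
  · obtain ⟨σ, hσ⟩ := hW' i
    have hW'i : W' i = S \ A := hσ.subset.antisymm fun v hv => by
      obtain ⟨b, hb⟩ := hW'cover v hv
      rcases Bool.eq_or_eq_not b i with rfl | rfl
      · exact hb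
      · simp [hempty] at hb
    rw [hW'i] at hσ
    exact positionallyDetermined_of i (isDominion_of_sdiff_attr_min hS hm (by simp [i]) hσ)
      ⟨id, isDominion_empty⟩ fun v hv => .inl hv
  · obtain ⟨σ', hσ'⟩ := hW' (!i)
    set B := G.attr (!i) S (W' (!i))
    have hB := (hσ'.of_sdiff_attr (Bool.self_ne_not i)).attr
    obtain ⟨v₁, hv₁⟩ := Set.nonempty_iff_ne_empty.2 hempty
    have hBS : S \ B ⊂ S :=
      Set.sdiff_ssubset_left_iff.2 ⟨v₁, hB.subset (subset_attr hv₁), subset_attr hv₁⟩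
    obtain ⟨W'', hW''cover, hW''⟩ := ih _ hBS (sdiff_attr_total hS)
    obtain ⟨σ₁, h₁⟩ := hW'' i
    obtain ⟨σ₂, h₂⟩ := hW'' (!i)
    refine positionallyDetermined_of i ⟨σ₁, h₁.of_sdiff_attr (Bool.not_ne_self i)⟩
      ⟨_, hB.union_sdiff h₂⟩ fun v hv => ?_
    by_cases hvB : v ∈ B
    · exact .inr (.inl hvB)
    · obtain ⟨b, hb⟩ := hW''cover v ⟨hv, hvB⟩
      rcases Bool.eq_or_eq_not b i with rfl | rfl
      · exact .inl hb
      · exact .inr (.inr hb)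

end ParityGame

namespace RoundGame

variable {S α β : Type*} (τ : S → α → β → S) (c : S → ℕ)

/-- The game of rounds in which, at state `s`, player `true` picks `a : α`, then player `false`
answers `b : β` and the state becomes `τ s a b`. Its positions are the states `inl s` and the
intermediate positions `inr (s, a)`. -/
def game : ParityGame (S ⊕ S × α) where
  owner := Sum.elim (fun _ => true) fun _ => false
  Move v u := match v with
    | .inl s => ∃ a, u = .inr (s, a)
    | .inr (s, a) => ∃ b, u = .inl (τ s a b)
  priority := c ∘ Sum.elim id Prod.fst

def interleave (s : ℕ → S) (a : ℕ → α) (n : ℕ) : S ⊕ S × α :=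
  if Even n then .inl (s (n / 2)) else .inr (s (n / 2), a (n / 2))

theorem interleave_two_mul (s : ℕ → S) (a : ℕ → α) (k : ℕ) :
    interleave s a (2 * k) = .inl (s k) := by
  simp [interleave]

theorem interleave_two_mul_add_one (s : ℕ → S) (a : ℕ → α) (k : ℕ) :
    interleave s a (2 * k + 1) = .inr (s k, a k) := by
  simp [interleave, Nat.add_div_of_dvd_right]

theorem interleave_two_mul_add_two (s : ℕ → S) (a : ℕ → α) (k : ℕ) :
    interleave s a (2 * k + 1 + 1) = .inl (s (k + 1)) :=
  interleave_two_mul s a (k + 1)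

theorem isPlay_interleave {s : ℕ → S} {a : ℕ → α} (h : ∀ k, ∃ b, s (k + 1) = τ (s k) (a k) b) :
    (game τ c).IsPlay Set.univ (interleave s a) := by
  intro n
  refine ⟨trivial, ?_⟩
  obtain ⟨k, rfl | rfl⟩ := Nat.even_or_odd' n
  · rw [interleave_two_mul, interleave_two_mul_add_one]
    exact ⟨a k, rfl⟩
  · obtain ⟨b, hb⟩ := h k
    rw [interleave_two_mul_add_one, interleave_two_mul_add_two, hb]
    exact ⟨b, rfl⟩

theorem minInf_interleave [Finite S] [Finite α] (s : ℕ → S) (a : ℕ → α) :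
    minInf (game τ c).priority (interleave s a) = minInf c s := by
  have hstate : Sum.elim id Prod.fst ∘ interleave s a = s ∘ (· / 2) := by
    funext n
    by_cases hn : Even n <;> simp [interleave, hn]
  rw [game, ← minInf_comp, hstate]
  exact minInf_comp_of_rightInverse c (g := (2 * ·))
    (tendsto_atTop_atTop.2 fun k => ⟨2 * k, fun n hn => by omega⟩)
    (tendsto_atTop_atTop.2 fun k => ⟨k, fun n hn => by omega⟩)
    (Eventually.of_forall fun n => by omega) s


noncomputable def answer [Nonempty β] (σ : S ⊕ S × α → S ⊕ S × α) (s : S) (a : α) : β :=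
  Classical.epsilon fun b => σ (.inr (s, a)) = .inl (τ s a b)

theorem answer_spec [Nonempty β] {σ : S ⊕ S × α → S ⊕ S × α} {s : S} {a : α} {b : β}
    (h : σ (.inr (s, a)) = .inl (τ s a b)) : σ (.inr (s, a)) = .inl (τ s a (answer τ σ s a)) :=
  Classical.epsilon_spec (p := fun b => σ (.inr (s, a)) = .inl (τ s a b)) ⟨b, h⟩

noncomputable def choice [Nonempty α] (σ : S ⊕ S × α → S ⊕ S × α) (s : S) : α :=
  Classical.epsilon fun a => σ (.inl s) = .inr (s, a)

theorem choice_spec [Nonempty α] {σ : S ⊕ S × α → S ⊕ S × α} {s : S} {a : α}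
    (h : σ (.inl s) = .inr (s, a)) : σ (.inl s) = .inr (s, choice σ s) :=
  Classical.epsilon_spec (p := fun a => σ (.inl s) = .inr (s, a)) ⟨a, h⟩

variable {τ c}

theorem even_minInf_of_isDominion [Finite S] [Finite α] [Nonempty β] {W : Set (S ⊕ S × α)}
    {σ : S ⊕ S × α → S ⊕ S × α} {s₀ : S} (hD : (game τ c).IsDominion false Set.univ W σ)
    (h0 : .inl s₀ ∈ W) (a : ℕ → α) :
    Even (minInf c (run (fun s x => τ s x (answer τ σ s x)) s₀ a)) := by
  set s := run (fun s x => τ s x (answer τ σ s x)) s₀ a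
  have hs (k : ℕ) : s (k + 1) = τ (s k) (a k) (answer τ σ (s k) (a k)) := run_succ ..
  have hwin := hD.wins_of_mem (isPlay_interleave τ c fun k => ⟨_, hs k⟩) ?_ (t := 0)
    (by rwa [show interleave s a 0 = .inl s₀ from interleave_two_mul s a 0])
  · simpa [ParityGame.Wins, minInf_interleave] using hwin
  · intro n hn hown
    obtain ⟨k, rfl | rfl⟩ := Nat.even_or_odd' n
    · rw [interleave_two_mul] at hown
      exact absurd hown (by simp [game])
    · rw [interleave_two_mul_add_one] at hn ⊢
      rw [interleave_two_mul_add_two, hs k]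
      obtain ⟨b, hb⟩ := (hD.move_mem _ hn rfl).1
      exact (answer_spec τ hb).symm

theorem not_even_minInf_of_isDominion [Finite S] [Finite α] [Nonempty α]
    {W : Set (S ⊕ S × α)} {σ : S ⊕ S × α → S ⊕ S × α} {s₀ : S}
    (hD : (game τ c).IsDominion true Set.univ W σ) (h0 : .inl s₀ ∈ W) (b : ℕ → β) :
    ¬ Even (minInf c (run (fun s y => τ s (choice σ s) y) s₀ b)) := by
  set s := run (fun s y => τ s (choice σ s) y) s₀ b
  have hs (k : ℕ) : s (k + 1) = τ (s k) (choice σ (s k)) (b k) := run_succ ..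
  have hwin := hD.wins_of_mem (p := interleave s fun k => choice σ (s k))
    (isPlay_interleave τ c fun k => ⟨b k, hs k⟩) ?_ (t := 0)
    (by rwa [show interleave s _ 0 = .inl s₀ from interleave_two_mul s _ 0])
  · simpa [ParityGame.Wins, minInf_interleave] using hwin
  · intro n hn hown
    obtain ⟨k, rfl | rfl⟩ := Nat.even_or_odd' n
    · rw [interleave_two_mul] at hn ⊢
      rw [interleave_two_mul_add_one]
      obtain ⟨a, ha⟩ := (hD.move_mem _ hn rfl).1
      exact (choice_spec ha).symm
    · rw [interleave_two_mul_add_one] at hown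
      exact absurd hown (by simp [game])

theorem determinacy [Finite S] [Finite α] [Nonempty α] [Nonempty β] (s₀ : S) :
    (∃ f : S → α → β, ∀ a, Even (minInf c (run (fun s x => τ s x (f s x)) s₀ a))) ∨
    (∃ g : S → α, ∀ b, ¬ Even (minInf c (run (fun s y => τ s (g s) y) s₀ b))) := by
  have htotal : ∀ v ∈ Set.univ, ∃ u ∈ Set.univ, (game τ c).Move v u := by
    rintro (s | ⟨s, a⟩) -
    · exact ⟨.inr (s, Classical.arbitrary α), trivial, _, rfl⟩
    · exact ⟨.inl (τ s a (Classical.arbitrary β)), trivial, _, rfl⟩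
  obtain ⟨W, hcover, hW⟩ := (game τ c).positionallyDetermined Set.univ htotal
  obtain ⟨b, hb⟩ := hcover (.inl s₀) trivial
  obtain ⟨σ, hσ⟩ := hW b
  cases b
  · exact .inl ⟨answer τ σ, even_minInf_of_isDominion hσ hb⟩
  · exact .inr ⟨choice σ, not_even_minInf_of_isDominion hσ hb⟩

end RoundGame

theorem finite_range_of_eventually_periodic {X : Type*} {f : ℕ → X} {p d : ℕ} (hp : 0 < p)
    (h : ∀ n > d, f (n + p) = f n) : (Set.range f).Finite := by
  refine ((Set.finite_Iic (d + p)).image f).subset ?_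
  rintro _ ⟨n, rfl⟩
  induction n using Nat.strong_induction_on with
  | _ n ih =>
  by_cases hn : n ≤ d + p
  · exact ⟨n, hn, rfl⟩
  · obtain ⟨m, rfl⟩ : ∃ m, n = m + p := ⟨n - p, by omega⟩
    rw [h m (by omega)]
    exact ih m (by omega)

section Tails

variable {Q α β γ : Type*}

def tails (z : Stream' γ) : Set (Stream' γ) := Set.range (Stream'.drop · z)

theorem tail_mem_tails {z t : Stream' γ} (ht : t ∈ tails z) : t.tail ∈ tails z := by
  obtain ⟨n, rfl⟩ := ht
  exact ⟨n + 1, by simp only [Stream'.tail_drop, Stream'.drop_succ]⟩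

theorem finite_tails {z : Stream' γ} {p d : ℕ} (hp : 0 < p) (h : ∀ n > d, z (n + p) = z n) :
    (tails z).Finite :=
  finite_range_of_eventually_periodic (d := d) hp fun n hn => funext fun k => by
    show z (k + (n + p)) = z (k + n)
    rw [← Nat.add_assoc]
    exact h (k + n) (by omega)

/-- The second component is the tail of `z` still to be read, whose head is the next letter. -/
def productStep (δ : Q → α × β × γ → Q) (z : Stream' γ) (s : Q × tails z) (x : α) (y : β) :
    Q × tails z :=
  (δ s.1 (x, y, s.2.1.head), ⟨s.2.1.tail, tail_mem_tails s.2.2⟩)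

theorem eq_run_of_productStep {δ : Q → α × β × γ → Q} {z : Stream' γ} {q₀ : Q}
    {x : ℕ → α} {y : ℕ → β} {s : ℕ → Q × tails z} (h0 : s 0 = (q₀, ⟨z, 0, rfl⟩))
    (hs : ∀ n, s (n + 1) = productStep δ z (s n) (x n) (y n)) :
    ∀ n, s n = (run δ q₀ (fun n => (x n, y n, z n)) n, ⟨z.drop n, n, rfl⟩)
  | 0 => h0
  | n + 1 => by
    rw [hs, eq_run_of_productStep h0 hs n, productStep, run_succ, Stream'.head_drop]
    congr 2
    rw [Stream'.tail_drop, Stream'.drop_succ]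

theorem parityAccepts_iff_of_productStep [Finite Q] {δ : Q → α × β × γ → Q} {z : Stream' γ}
    [Finite (tails z)] {q₀ : Q} {col : Q → ℕ} {x : ℕ → α} {y : ℕ → β} {s : ℕ → Q × tails z}
    (h0 : s 0 = (q₀, ⟨z, 0, rfl⟩)) (hs : ∀ n, s (n + 1) = productStep δ z (s n) (x n) (y n)) :
    ParityAccepts δ q₀ col (fun n => (x n, y n, z n)) ↔ Even (minInf (col ∘ Prod.fst) s) := by
  rw [parityAccepts_iff_even_minInf, ← minInf_comp]
  congr! 3
  funext n
  simp [eq_run_of_productStep h0 hs n]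

end Tails

/-- For an ultimately periodic parameter `P` and any finite deterministic
parity automaton over `{0,1}³` defining `R_A`, either some finite-state causal
operator `F(X, χ_P)` satisfies `(X, F(X, χ_P), χ_P) ∈ R_A` for every `X`, or
some finite-state strongly causal operator `G(Y, χ_P)` satisfies
`(G(Y, χ_P), Y, χ_P) ∉ R_A` for every `Y`. -/
theorem ultimately_periodic_finite_state_determinacy (P : Set ℕ)
    (hP : ∃ p > 0, ∃ d : ℕ, ∀ n > d, (n ∈ P ↔ n + p ∈ P))
    {Q : Type} [Fintype Q] (δ : Q → Bool × Bool × Bool → Q) (q₀ : Q)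
    (col : Q → ℕ) :
    (∃ F : (ℕ → Bool) → (ℕ → Bool) → (ℕ → Bool),
      FiniteStateCausal (PairOp F) ∧
      ∀ X : ℕ → Bool,
        ParityAccepts δ q₀ col (fun n => (X n, F X (chi P) n, chi P n))) ∨
    (∃ G : (ℕ → Bool) → (ℕ → Bool) → (ℕ → Bool),
      FiniteStateStronglyCausal (PairOp G) ∧
      ∀ Y : ℕ → Bool,
        ¬ ParityAccepts δ q₀ col (fun n => (G Y (chi P) n, Y n, chi P n))) := by
  obtain ⟨p, hp, d, hper⟩ := hP
  have : Finite (tails (chi P)) :=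
    (finite_tails (d := d) hp fun n hn => by simp [chi, hper n hn]).to_subtype
  let s₀ : Q × tails (chi P) := (q₀, ⟨chi P, 0, rfl⟩)
  -- The operators ignore their second argument: the state already tracks the tail of `chi P`.
  rcases RoundGame.determinacy (τ := productStep δ (chi P)) (c := col ∘ Prod.fst) s₀
    with ⟨f, hf⟩ | ⟨g, hg⟩
  · let M s x := productStep δ (chi P) s x (f s x)
    refine .inl ⟨fun X _ n => f (run M s₀ X n) (X n), ⟨_, Fintype.ofFinite _,
      fun s xz => M s xz.1, s₀, fun s xz => f s xz.1, fun x n => ?_⟩, fun X => ?_⟩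
    · show _ = f (run (fun s xz => M s xz.1) s₀ x n) _
      rw [run_comp]
      rfl
    · rw [parityAccepts_iff_of_productStep (s := run M s₀ X) rfl fun n => run_succ ..]
      exact hf X
  · let M s y := productStep δ (chi P) s (g s) y
    refine .inr ⟨fun Y _ n => g (run M s₀ Y n), ⟨_, Fintype.ofFinite _,
      fun s yz => M s yz.1, s₀, g, fun y n => ?_⟩, fun Y => ?_⟩
    · show _ = g (run (fun s yz => M s yz.1) s₀ y n)
      rw [run_comp]
      rfl
    · rw [parityAccepts_iff_of_productStep (s := run M s₀ Y) rfl fun n => run_succ ..]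
      exact hg Y
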